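/- arXiv:2103.06698 — 3 statements merged into one kernel-verified Lean document; each statement's English description precedes it below -/
import Mathlib

section
/- Let u, v, w ≥ 3 be real parameters and set B := sin²(π/u)·sin²(π/w) − cos²(π/v). If B ≠ 0, then the inverse of the Coxeter–Schläfli matrix (b^{ij}) is the symmetric 4×4 matrix (h_{ij}) given by (1/B) times the matrix with rows: (sin²(π/w) − cos²(π/v), cos(π/u)sin²(π/w), cos(π/u)cos(π/v), cos(π/u)cos(π/v)cos(π/w)); (cos(π/u)sin²(π/w), sin²(π/w), cos(π/v), cos(π/w)cos(π/v)); (cos(π/u)cos(π/v), cos(π/v), sin²(π/u), cos(π/w)sin²(π/u)); (cos(π/u)cos(π/v)cos(π/w), cos(π/w)cos(π/v), cos(π/w)sin²(π/u), sin²(π/u) − cos²(π/v)). -/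
open Real

/-- The Coxeter–Schläfli matrix of the orthoscheme with parameters (u, v, w). -/
noncomputable def coxeterSchlafliMatrix (u v w : ℝ) : Matrix (Fin 4) (Fin 4) ℝ :=
  !![1, -Real.cos (π/u), 0, 0;
     -Real.cos (π/u), 1, -Real.cos (π/v), 0;
     0, -Real.cos (π/v), 1, -Real.cos (π/w);
     0, 0, -Real.cos (π/w), 1]

/-!
With `a, b, c` the cosines of `π/u, π/v, π/w`, the Coxeter–Schläfli matrix is unit tridiagonal, and
`B = (1 - a²)(1 - c²) - b²` is its determinant. The claimed inverse is `B⁻¹` times its adjugate,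
which is checked entrywise from `M * adj M = (det M) • 1`.
-/

namespace Matrix

variable {R : Type*}

def unitTridiagonal [Ring R] (a b c : R) : Matrix (Fin 4) (Fin 4) R :=
  !![1, -a, 0, 0;
     -a, 1, -b, 0;
     0, -b, 1, -c;
     0, 0, -c, 1]

/-- The adjugate of `unitTridiagonal a b c`, with `1 - a ^ 2` and `1 - c ^ 2` kept unexpanded since
they become `sin² (π/u)` and `sin² (π/w)`. -/
def unitTridiagonalAdj [Ring R] (a b c : R) : Matrix (Fin 4) (Fin 4) R :=
  !![(1 - c ^ 2) - b ^ 2, a * (1 - c ^ 2), a * b, a * b * c;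
     a * (1 - c ^ 2), 1 - c ^ 2, b, c * b;
     a * b, b, 1 - a ^ 2, c * (1 - a ^ 2);
     a * b * c, c * b, c * (1 - a ^ 2), (1 - a ^ 2) - b ^ 2]

theorem unitTridiagonal_mul_adj [CommRing R] (a b c : R) :
    unitTridiagonal a b c * unitTridiagonalAdj a b c =
      ((1 - a ^ 2) * (1 - c ^ 2) - b ^ 2) • (1 : Matrix (Fin 4) (Fin 4) R) := by
  ext i j
  fin_cases i <;> fin_cases j <;>
    simp [unitTridiagonal, unitTridiagonalAdj, mul_apply, Fin.sum_univ_four] <;> ring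

theorem inv_unitTridiagonal [Field R] {a b c : R} (h : (1 - a ^ 2) * (1 - c ^ 2) - b ^ 2 ≠ 0) :
    (unitTridiagonal a b c)⁻¹ = ((1 - a ^ 2) * (1 - c ^ 2) - b ^ 2)⁻¹ • unitTridiagonalAdj a b c := by
  refine inv_eq_right_inv ?_
  rw [mul_smul_comm, unitTridiagonal_mul_adj, smul_smul, inv_mul_cancel₀ h, one_smul]

end Matrix

theorem inv_coxeterSchlafliMatrix_general (u v w : ℝ)
    (hB : Real.sin (π/u) ^ 2 * Real.sin (π/w) ^ 2 - Real.cos (π/v) ^ 2 ≠ 0) :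
    (coxeterSchlafliMatrix u v w)⁻¹ =
      (Real.sin (π/u) ^ 2 * Real.sin (π/w) ^ 2 - Real.cos (π/v) ^ 2)⁻¹ •
      !![Real.sin (π/w) ^ 2 - Real.cos (π/v) ^ 2,
         Real.cos (π/u) * Real.sin (π/w) ^ 2,
         Real.cos (π/u) * Real.cos (π/v),
         Real.cos (π/u) * Real.cos (π/v) * Real.cos (π/w);
         Real.cos (π/u) * Real.sin (π/w) ^ 2,
         Real.sin (π/w) ^ 2,
         Real.cos (π/v),
         Real.cos (π/w) * Real.cos (π/v);
         Real.cos (π/u) * Real.cos (π/v),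
         Real.cos (π/v),
         Real.sin (π/u) ^ 2,
         Real.cos (π/w) * Real.sin (π/u) ^ 2;
         Real.cos (π/u) * Real.cos (π/v) * Real.cos (π/w),
         Real.cos (π/w) * Real.cos (π/v),
         Real.cos (π/w) * Real.sin (π/u) ^ 2,
         Real.sin (π/u) ^ 2 - Real.cos (π/v) ^ 2] := by
  simp only [Real.sin_sq] at hB ⊢
  exact Matrix.inv_unitTridiagonal hB

theorem inv_coxeterSchlafliMatrix (u v w : ℝ) (hu : 3 ≤ u) (hv : 3 ≤ v) (hw : 3 ≤ w)
    (hB : Real.sin (π/u) ^ 2 * Real.sin (π/w) ^ 2 - Real.cos (π/v) ^ 2 ≠ 0) :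
    (coxeterSchlafliMatrix u v w)⁻¹ =
      (Real.sin (π/u) ^ 2 * Real.sin (π/w) ^ 2 - Real.cos (π/v) ^ 2)⁻¹ •
      !![Real.sin (π/w) ^ 2 - Real.cos (π/v) ^ 2,
         Real.cos (π/u) * Real.sin (π/w) ^ 2,
         Real.cos (π/u) * Real.cos (π/v),
         Real.cos (π/u) * Real.cos (π/v) * Real.cos (π/w);
         Real.cos (π/u) * Real.sin (π/w) ^ 2,
         Real.sin (π/w) ^ 2,
         Real.cos (π/v),
         Real.cos (π/w) * Real.cos (π/v);
         Real.cos (π/u) * Real.cos (π/v),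
         Real.cos (π/v),
         Real.sin (π/u) ^ 2,
         Real.cos (π/w) * Real.sin (π/u) ^ 2;
         Real.cos (π/u) * Real.cos (π/v) * Real.cos (π/w),
         Real.cos (π/w) * Real.cos (π/v),
         Real.cos (π/w) * Real.sin (π/u) ^ 2,
         Real.sin (π/u) ^ 2 - Real.cos (π/v) ^ 2] :=
  inv_coxeterSchlafliMatrix_general u v w hB
end

section
/- Let u, v, w ≥ 3 be real parameters with B := sin²(π/u)·sin²(π/w) − cos²(π/v) < 0, and let (h_{ij}) be the inverse of the Coxeter–Schläfli matrix. Then h_{00} > 0 if and only if 1/v + 1/w < 1/2, and h_{33} > 0 if and only if 1/u + 1/v < 1/2. -/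
open Real

/-! The entries of `(b^{ij})⁻¹` on the diagonal are cofactors divided by the determinant. For the
path-shaped Gram matrix these are `h₀₀ = (1 - cos²(π/v) - cos²(π/w)) / det` and
`h₃₃ = (1 - cos²(π/u) - cos²(π/v)) / det`, and `det = sin²(π/u) sin²(π/w) - cos²(π/v) < 0` by
hypothesis. So `h₀₀ > 0` iff `cos²(π/v) + cos²(π/w) > 1 = sin²(π/v) + cos²(π/v)`, i.e.
`cos(π/w) > sin(π/v) = cos(π/2 - π/v)`, i.e. `π/w < π/2 - π/v`; `h₃₃` is the same computation
after reversing the path `0-1-2-3`, which swaps `u` and `w`. -/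

section LinearCoxeterMatrix

variable {R : Type*} [CommRing R]

def linearCoxeterMatrix (a b c : R) : Matrix (Fin 4) (Fin 4) R :=
  !![1, -a, 0, 0; -a, 1, -b, 0; 0, -b, 1, -c; 0, 0, -c, 1]

theorem det_linearCoxeterMatrix (a b c : R) :
    (linearCoxeterMatrix a b c).det = (1 - a ^ 2) * (1 - c ^ 2) - b ^ 2 := by
  simp [linearCoxeterMatrix, Matrix.det_succ_row_zero, Fin.sum_univ_succ, Fin.succAbove]
  ring

theorem adjugate_linearCoxeterMatrix_zero_zero (a b c : R) :
    (linearCoxeterMatrix a b c).adjugate 0 0 = 1 - b ^ 2 - c ^ 2 := by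
  simp [linearCoxeterMatrix, Matrix.adjugate_apply, Matrix.det_succ_row_zero, Fin.sum_univ_succ,
    Matrix.updateRow_apply, Pi.single_apply, Fin.succAbove]
  ring

theorem linearCoxeterMatrix_submatrix_rev (a b c : R) :
    (linearCoxeterMatrix a b c).submatrix Fin.revPerm Fin.revPerm = linearCoxeterMatrix c b a := by
  ext i j
  fin_cases i <;> fin_cases j <;> rfl

theorem adjugate_linearCoxeterMatrix_three_three (a b c : R) :
    (linearCoxeterMatrix a b c).adjugate 3 3 = 1 - a ^ 2 - b ^ 2 := by
  rw [← linearCoxeterMatrix_submatrix_rev c b a, Matrix.adjugate_submatrix_equiv_self,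
    Matrix.submatrix_apply]
  exact (adjugate_linearCoxeterMatrix_zero_zero c b a).trans (by ring)

end LinearCoxeterMatrix

theorem Matrix.inv_apply_pos_iff_of_det_neg {n K : Type*} [Fintype n] [DecidableEq n] [Field K]
    [LinearOrder K] [IsStrictOrderedRing K] {A : Matrix n n K} (hA : A.det < 0) (i j : n) :
    0 < A⁻¹ i j ↔ A.adjugate i j < 0 := by
  rw [Matrix.inv_def, Matrix.smul_apply, smul_eq_mul, Ring.inverse_eq_inv', ← neg_mul_neg,
    mul_pos_iff_of_pos_left (by simpa using hA), neg_pos]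

theorem one_lt_cos_sq_add_cos_sq_iff {x y : ℝ} (hx : x ∈ Set.Icc 0 (π / 2))
    (hy : y ∈ Set.Icc 0 (π / 2)) :
    1 < cos x ^ 2 + cos y ^ 2 ↔ x + y < π / 2 := by
  obtain ⟨hx₀, hx₁⟩ := hx
  obtain ⟨hy₀, hy₁⟩ := hy
  have hsin : 1 - cos x ^ 2 = cos (π / 2 - x) ^ 2 := by
    rw [cos_pi_div_two_sub, ← sin_sq_add_cos_sq x]
    ring
  calc 1 < cos x ^ 2 + cos y ^ 2
      ↔ cos (π / 2 - x) ^ 2 < cos y ^ 2 := by rw [← hsin]; constructor <;> intro <;> linarith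
    _ ↔ cos (π / 2 - x) < cos y :=
        pow_lt_pow_iff_left₀ (cos_nonneg_of_mem_Icc ⟨by linarith, by linarith⟩)
          (cos_nonneg_of_mem_Icc ⟨by linarith, by linarith⟩) two_ne_zero
    _ ↔ y < π / 2 - x :=
        strictAntiOn_cos.lt_iff_gt ⟨by linarith, by linarith⟩ ⟨by linarith, by linarith⟩
    _ ↔ x + y < π / 2 := by constructor <;> intro <;> linarith

theorem pi_div_mem_Icc_zero_pi_div_two {v : ℝ} (hv : 2 ≤ v) : π / v ∈ Set.Icc 0 (π / 2) :=
  ⟨by positivity, div_le_div_of_nonneg_left pi_pos.le two_pos hv⟩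

theorem one_lt_cos_pi_div_sq_add_cos_pi_div_sq_iff {v w : ℝ} (hv : 2 ≤ v) (hw : 2 ≤ w) :
    1 < cos (π / v) ^ 2 + cos (π / w) ^ 2 ↔ 1 / v + 1 / w < 1 / 2 := by
  rw [one_lt_cos_sq_add_cos_sq_iff (pi_div_mem_Icc_zero_pi_div_two hv)
    (pi_div_mem_Icc_zero_pi_div_two hw)]
  simp only [div_eq_mul_one_div π, ← mul_add, mul_lt_mul_iff_right₀ pi_pos]

theorem coxeterSchlafliMatrix_eq (u v w : ℝ) :
    coxeterSchlafliMatrix u v w =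
      linearCoxeterMatrix (cos (π / u)) (cos (π / v)) (cos (π / w)) := rfl

theorem det_coxeterSchlafliMatrix (u v w : ℝ) :
    (coxeterSchlafliMatrix u v w).det = sin (π / u) ^ 2 * sin (π / w) ^ 2 - cos (π / v) ^ 2 := by
  rw [coxeterSchlafliMatrix_eq, det_linearCoxeterMatrix, sin_sq, sin_sq]

theorem principal_vertices_outer_iff (u v w : ℝ) (hu : 3 ≤ u) (hv : 3 ≤ v) (hw : 3 ≤ w)
    (hB : Real.sin (π/u) ^ 2 * Real.sin (π/w) ^ 2 - Real.cos (π/v) ^ 2 < 0) :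
    (0 < (coxeterSchlafliMatrix u v w)⁻¹ 0 0 ↔ 1/v + 1/w < 1/2) ∧
    (0 < (coxeterSchlafliMatrix u v w)⁻¹ 3 3 ↔ 1/u + 1/v < 1/2) := by
  have hdet := (det_coxeterSchlafliMatrix u v w).symm ▸ hB
  rw [Matrix.inv_apply_pos_iff_of_det_neg hdet, Matrix.inv_apply_pos_iff_of_det_neg hdet,
    coxeterSchlafliMatrix_eq, adjugate_linearCoxeterMatrix_zero_zero,
    adjugate_linearCoxeterMatrix_three_three, sub_sub, sub_neg, sub_sub, sub_neg]
  exact ⟨one_lt_cos_pi_div_sq_add_cos_pi_div_sq_iff (by linarith) (by linarith),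
    one_lt_cos_pi_div_sq_add_cos_pi_div_sq_iff (by linarith) (by linarith)⟩
end

section
/- Let V be a real vector space with a symmetric bilinear form ⟨·,·⟩, let a₀, a₃ ∈ V, write hᵢⱼ := ⟨aᵢ, aⱼ⟩, and suppose h₀₀ > 0, h₃₃ > 0 and h₀₀h₃₃ − h₀₃² < 0. Set j := h₃₃ • a₀ − h₀₃ • a₃ and h := h₀₀ • a₃ − h₀₃ • a₀. Then −⟨j, h⟩ / √(⟨j, j⟩·⟨h, h⟩) = −h₀₃ / √(h₀₀·h₃₃). -/
/-!
`j` is (a multiple of) the component of `a₀` that is `B`-orthogonal to `a₃`, i.e. the point of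
the edge `A₀A₃` on the polar plane of `A₃`, and symmetrically for `h`. Expanding through these
orthogonality relations, `⟨j, h⟩`, `⟨j, j⟩` and `⟨h, h⟩` are `-h₀₃`, `h₃₃` and `h₀₀` times the
Gram determinant `h₀₀h₃₃ − h₀₃²`. As this determinant is negative,
`√(⟨j, j⟩⟨h, h⟩) = √(h₀₀h₃₃) · (h₀₃² − h₀₀h₃₃)`, and the factor `h₀₃² − h₀₀h₃₃` cancels.
-/

namespace LinearMap.BilinForm

variable {V : Type*} [AddCommGroup V] [Module ℝ V] (B : LinearMap.BilinForm ℝ V)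

/-- `B y y` times the `B`-orthogonal projection of `x` onto the polar hyperplane of `y`. -/
def polarProj (x y : V) : V := B y y • x - B x y • y

def gramDet (x y : V) : ℝ := B x x * B y y - B x y ^ 2

theorem apply_polarProj (u x y : V) :
    B u (polarProj B x y) = B y y * B u x - B x y * B u y := by
  simp only [polarProj, map_sub, map_smul, smul_eq_mul]

theorem polarProj_apply_right (x y : V) : B (polarProj B x y) y = 0 := by
  simp only [polarProj, map_sub, map_smul, LinearMap.sub_apply, LinearMap.smul_apply, smul_eq_mul]
  ring

variable {B}

theorem polarProj_apply_left (hB : ∀ x y : V, B x y = B y x) (x y : V) :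
    B (polarProj B x y) x = gramDet B x y := by
  simp only [polarProj, gramDet, map_sub, map_smul, LinearMap.sub_apply, LinearMap.smul_apply,
    smul_eq_mul, hB y x]
  ring

theorem polarProj_apply_self (hB : ∀ x y : V, B x y = B y x) (x y : V) :
    B (polarProj B x y) (polarProj B x y) = B y y * gramDet B x y := by
  rw [apply_polarProj, polarProj_apply_left hB, polarProj_apply_right, mul_zero, sub_zero]

theorem polarProj_apply_polarProj (hB : ∀ x y : V, B x y = B y x) (x y : V) :
    B (polarProj B x y) (polarProj B y x) = -(B x y * gramDet B x y) := by
  rw [apply_polarProj, polarProj_apply_left hB, polarProj_apply_right, hB y x, mul_zero,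
    zero_sub]

theorem gramDet_comm (hB : ∀ x y : V, B x y = B y x) (x y : V) :
    gramDet B y x = gramDet B x y := by
  simp only [gramDet, hB y x]
  ring

end LinearMap.BilinForm

open LinearMap.BilinForm in
theorem cosh_dist_J_H_general (V : Type*) [AddCommGroup V] [Module ℝ V]
    (B : LinearMap.BilinForm ℝ V) (hB : ∀ x y : V, B x y = B y x)
    (a₀ a₃ : V)
    (h03 : B a₀ a₀ * B a₃ a₃ - (B a₀ a₃) ^ 2 < 0)
    (j h : V) (hj : j = B a₃ a₃ • a₀ - B a₀ a₃ • a₃)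
    (hh : h = B a₀ a₀ • a₃ - B a₀ a₃ • a₀) :
    -(B j h) / Real.sqrt (B j j * B h h) =
      -(B a₀ a₃) / Real.sqrt (B a₀ a₀ * B a₃ a₃) := by
  have hj' : j = polarProj B a₀ a₃ := hj
  have hh' : h = polarProj B a₃ a₀ := by rw [hh, polarProj, hB a₃ a₀]
  have hdet : 0 < -gramDet B a₀ a₃ := neg_pos.mpr h03
  have hjh : -B j h = -B a₀ a₃ * -gramDet B a₀ a₃ := by
    rw [hj', hh', polarProj_apply_polarProj hB]
    ring
  have hjjhh : B j j * B h h = B a₀ a₀ * B a₃ a₃ * (-gramDet B a₀ a₃) ^ 2 := by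
    rw [hj', hh', polarProj_apply_self hB, polarProj_apply_self hB, gramDet_comm hB]
    ring
  rw [hjh, hjjhh, Real.sqrt_mul' _ (sq_nonneg _), Real.sqrt_sq hdet.le,
    mul_div_mul_right _ _ hdet.ne']

theorem cosh_dist_J_H (V : Type*) [AddCommGroup V] [Module ℝ V]
    (B : LinearMap.BilinForm ℝ V) (hB : ∀ x y : V, B x y = B y x)
    (a₀ a₃ : V)
    (h00 : 0 < B a₀ a₀) (h33 : 0 < B a₃ a₃)
    (h03 : B a₀ a₀ * B a₃ a₃ - (B a₀ a₃) ^ 2 < 0)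
    (j h : V) (hj : j = B a₃ a₃ • a₀ - B a₀ a₃ • a₃)
    (hh : h = B a₀ a₀ • a₃ - B a₀ a₃ • a₀) :
    -(B j h) / Real.sqrt (B j j * B h h) =
      -(B a₀ a₃) / Real.sqrt (B a₀ a₀ * B a₃ a₃) :=
  cosh_dist_J_H_general V B hB a₀ a₃ h03 j h hj hh
end
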